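/- Let φ(x) = (exp(x)−1−x)/x^2 for x ≠ 0 and φ(0)=1/2. Let X = p·Bern(q) with p>0, 0<q<1. Then ∑_{k≥2} (t^k/k!)·E[|X−E[X]|^k] = t^2·Var[X]·(q·φ(t p q) + (1−q)·φ(t p (1−q))), where Var[X] = p^2 q (1−q). -/

import Mathlib

open MeasureTheory

noncomputable def phi (x : ℝ) : ℝ :=
  if x = 0 then 1 / 2 else (Real.exp x - 1 - x) / x ^ 2

/-!
Since `X` takes only the values `p` and `0`, the central moment
`E|X - pq|^n` is `q (p(1-q))^n + (1-q) (pq)^n`. Summed against `t^n / n!` over `n ≥ 2`,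
each of the two terms is a tail of the exponential series, `∑_{n≥2} x^n/n! = x^2 φ(x)`,
and collecting the common factor `t^2 p^2 q (1-q)` gives the formula.
-/

theorem sq_mul_phi (x : ℝ) : x ^ 2 * phi x = Real.exp x - 1 - x := by
  by_cases hx : x = 0
  · simp [hx]
  · rw [phi, if_neg hx]
    field_simp

open Nat in
theorem hasSum_pow_div_factorial_add_two (x : ℝ) :
    HasSum (fun k : ℕ => x ^ (k + 2) / (k + 2)!) (x ^ 2 * phi x) := by
  have hexp : HasSum (fun n : ℕ => x ^ n / n !) (Real.exp x) := by
    rw [Real.exp_eq_exp_ℝ]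
    exact NormedSpace.expSeries_div_hasSum_exp x
  have htail : x ^ 2 * phi x = Real.exp x - ∑ i ∈ Finset.range 2, x ^ i / i ! := by
    simp [Finset.sum_range_succ, sq_mul_phi, sub_sub]
  rw [htail]
  exact (hasSum_nat_add_iff' 2).mpr hexp

theorem integral_comp_of_forall_eq_or_eq {Ω α E : Type*} [MeasurableSpace Ω]
    [MeasurableSpace α] [MeasurableSingletonClass α] [NormedAddCommGroup E] [NormedSpace ℝ E]
    [CompleteSpace E] (μ : Measure Ω) [IsProbabilityMeasure μ] {X : Ω → α} (hX : Measurable X)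
    {a b : α} (hval : ∀ ω, X ω = a ∨ X ω = b) (f : α → E) :
    ∫ ω, f (X ω) ∂μ =
      μ.real {ω | X ω = a} • f a + (1 - μ.real {ω | X ω = a}) • f b := by
  set A := {ω | X ω = a}
  have hA : MeasurableSet A := hX (measurableSet_singleton a)
  have hfX : (fun ω => f (X ω)) =
      fun ω => A.indicator (fun _ => f a) ω + Aᶜ.indicator (fun _ => f b) ω := by
    funext ω
    by_cases h : ω ∈ A
    · rw [Set.indicator_of_mem h, Set.indicator_of_notMem (Set.notMem_compl_iff.mpr h), add_zero,
        show X ω = a from h]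
    · rw [Set.indicator_of_notMem h, Set.indicator_of_mem (Set.mem_compl h), zero_add,
        (hval ω).resolve_left h]
  rw [hfX,
    integral_add ((integrable_const _).indicator hA) ((integrable_const _).indicator hA.compl),
    integral_indicator_const _ hA, integral_indicator_const _ hA.compl,
    probReal_compl_eq_one_sub hA]

theorem integral_abs_sub_pow_of_scaled_bernoulli {Ω : Type*} [MeasurableSpace Ω]
    (μ : Measure Ω) [IsProbabilityMeasure μ] {X : Ω → ℝ} (hX : Measurable X) {p q : ℝ}
    (hp : 0 ≤ p) (hq0 : 0 ≤ q) (hq1 : q ≤ 1) (hval : ∀ ω, X ω = p ∨ X ω = 0)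
    (hlaw : μ {ω | X ω = p} = ENNReal.ofReal q) (n : ℕ) :
    ∫ ω, |X ω - p * q| ^ n ∂μ = q * (p * (1 - q)) ^ n + (1 - q) * (p * q) ^ n := by
  have hq : μ.real {ω | X ω = p} = q := by
    rw [measureReal_def, hlaw, ENNReal.toReal_ofReal hq0]
  rw [integral_comp_of_forall_eq_or_eq μ hX hval (fun x => |x - p * q| ^ n), hq, smul_eq_mul,
    smul_eq_mul, zero_sub, abs_neg, abs_of_nonneg (by positivity : 0 ≤ p * q),
    abs_of_nonneg (by nlinarith : 0 ≤ p - p * q)]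
  ring

/-- For `X = p·Bern(q)`,
`∑_{k≥2} (t^k/k!) E[|X−E[X]|^k] = t² Var[X] (q φ(tpq) + (1−q) φ(tp(1−q)))`. -/
theorem central_moment_series_scaled_bernoulli
    {Ω : Type*} [MeasurableSpace Ω] (μ : Measure Ω) [IsProbabilityMeasure μ]
    (X : Ω → ℝ) (hX : Measurable X) (p q t : ℝ) (hp : 0 < p) (hq0 : 0 < q) (hq1 : q < 1)
    (hval : ∀ ω, X ω = p ∨ X ω = 0)
    (hlaw : μ {ω | X ω = p} = ENNReal.ofReal q) :
    ∑' k : ℕ, t ^ (k + 2) / (Nat.factorial (k + 2) : ℝ) *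
        ∫ ω, |X ω - p * q| ^ (k + 2) ∂μ =
      t ^ 2 * (p ^ 2 * q * (1 - q)) *
        (q * phi (t * p * q) + (1 - q) * phi (t * p * (1 - q))) := by
  have hsum := ((hasSum_pow_div_factorial_add_two (t * p * (1 - q))).mul_left q).add
    ((hasSum_pow_div_factorial_add_two (t * p * q)).mul_left (1 - q))
  convert hsum.tsum_eq using 1
  · congr 1 with k
    rw [integral_abs_sub_pow_of_scaled_bernoulli μ hX hp.le hq0.le hq1.le hval hlaw]
    simp only [mul_pow]
    ring
  · ring
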